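/- (Approximate alignment under residual constraints.) Let f_1, …, f_N : ℝ^d → ℝ be L-smooth with ‖∇f_i‖ ≤ G_f, let ρ_i > 0 sum to 1 with ρ_min = min_i ρ_i, c = ρ_min/G_f, F = Σ ρ_i f_i, and F ≥ F⋆. Fix η_l, η_g > 0, K_i ≥ 1 with K_max = max_i K_i. Consider a server trajectory θ_{t+1} = θ_t − η_g g_t, where at each round t the nonzero accumulated client updates g_i^t (from K_i local gradient-descent steps of rate η_l starting at θ_t) satisfy the perturbed alignment ⟨g_i^t/‖g_i^t‖, g_t⟩ = ρ_i + δ_{t,i} for residuals δ_{t,i} ∈ ℝ, and ‖g_t‖ ≤ G. Define R_t = (G_f + (L G_f/2) η_l (K_max − 1)) · Σ_{i=1}^N ρ_i |δ_{t,i}| and B_drift = (L G_f/2)(G + Σ_i ρ_i²). Then for any T ≥ 1: (1/T) Σ_{t=0}^{T−1} ‖∇F(θ_t)‖² ≤ (F(θ_0) − F⋆)/(c η_g T) + L η_g G²/(2c) + (B_drift/c) η_l (K_max − 1) + (1/(cT)) Σ_{t=0}^{T−1} R_t. -/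

import Mathlib

open scoped InnerProductSpace BigOperators

/-- Local gradient-descent trajectory. -/
noncomputable def traj {E : Type*} [NormedAddCommGroup E] [InnerProductSpace ℝ E]
    [CompleteSpace E] (f : E → ℝ) (ηl : ℝ) (θ : E) : ℕ → E
  | 0 => θ
  | k + 1 => traj f ηl θ k - ηl • gradient f (traj f ηl θ k)

/-!
The accumulated update of client `i` is `K_i ∇f_i(θ_t)` plus a drift term of norm at most
`K_i (L G_f / 2) η_l (K_max - 1)`, since the `k`-th local iterate lies within `k η_l G_f` of `θ_t`.
Substituting this decomposition into the perturbed alignment constraint bounds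
`⟪∇f_i(θ_t), g_t⟫` from below; averaging with the weights `ρ_i` and using
`ρ_min ‖∇F‖ ≤ Σ ρ_i² ‖∇f_i‖` and `‖∇F‖ ≤ G_f` gives
`c ‖∇F(θ_t)‖² ≤ ⟪∇F(θ_t), g_t⟫ + B_drift η_l (K_max - 1) + R_t`.
The descent lemma for the `L`-smooth `F` turns this into a per-round decrease of `F`,
which telescopes over the `T` rounds.
-/

open Finset

theorem mul_norm_sum_smul_le_sum_sq_mul_norm {V ι : Type*} [SeminormedAddCommGroup V]
    [NormedSpace ℝ V] [Fintype ι] (u : ι → V) {ρ : ι → ℝ} {ρmin : ℝ} (hρmin : 0 ≤ ρmin)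
    (hle : ∀ i, ρmin ≤ ρ i) :
    ρmin * ‖∑ i, ρ i • u i‖ ≤ ∑ i, ρ i ^ 2 * ‖u i‖ :=
  calc ρmin * ‖∑ i, ρ i • u i‖ ≤ ρmin * ∑ i, ρ i * ‖u i‖ := by
        gcongr
        refine (norm_sum_le _ _).trans_eq (sum_congr rfl fun i _ => ?_)
        rw [norm_smul, Real.norm_of_nonneg (hρmin.trans (hle i))]
    _ ≤ ∑ i, ρ i ^ 2 * ‖u i‖ := by
        rw [mul_sum]
        refine sum_le_sum fun i _ => ?_
        rw [sq, mul_assoc]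
        exact mul_le_mul_of_nonneg_right (hle i) (mul_nonneg (hρmin.trans (hle i)) (norm_nonneg _))

theorem norm_sum_smul_le_of_norm_le {V ι : Type*} [SeminormedAddCommGroup V] [NormedSpace ℝ V]
    {s : Finset ι} {ρ : ι → ℝ} {u : ι → V} {B : ℝ} (hρ : ∀ i ∈ s, 0 ≤ ρ i)
    (hρsum : ∑ i ∈ s, ρ i = 1) (hu : ∀ i ∈ s, ‖u i‖ ≤ B) :
    ‖∑ i ∈ s, ρ i • u i‖ ≤ B := by
  simpa using (convex_closedBall (0 : V) B).sum_mem hρ hρsum (by simpa using hu)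

section InnerProductSpace

variable {E : Type*} [NormedAddCommGroup E] [InnerProductSpace ℝ E]

theorem real_inner_normalize_smul_mul_norm {v g : E} {η : ℝ} (hη : 0 < η) :
    ⟪‖η • v‖⁻¹ • (η • v), g⟫_ℝ * ‖v‖ = ⟪v, g⟫_ℝ := by
  change ⟪NormedSpace.normalize (η • v), g⟫_ℝ * ‖v‖ = _
  rw [NormedSpace.normalize_smul_of_pos hη, mul_comm, ← real_inner_smul_left,
    NormedSpace.norm_smul_normalize]

theorem sub_le_inner_of_inner_eq_norm_mul {u e g : E} {K ρ δ Gf D G : ℝ} (hK : 0 < K)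
    (hρ : 0 ≤ ρ) (halign : ⟪K • u + e, g⟫_ℝ = ‖K • u + e‖ * (ρ + δ))
    (hS : ‖K • u + e‖ ≤ K * Gf) (he : ‖e‖ ≤ K * D) (hg : ‖g‖ ≤ G) :
    ρ * ‖u‖ - ρ * D - Gf * |δ| - D * G ≤ ⟪u, g⟫_ℝ := by
  have hSlow : K * ‖u‖ - ‖e‖ ≤ ‖K • u + e‖ := by
    have := norm_sub_norm_le (K • u) (-e)
    rwa [norm_neg, sub_neg_eq_add, norm_smul, Real.norm_of_nonneg hK.le] at this
  have hδ : -(K * Gf * |δ|) ≤ ‖K • u + e‖ * δ := by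
    nlinarith [neg_abs_le δ, mul_le_mul_of_nonneg_right hS (abs_nonneg δ), norm_nonneg (K • u + e)]
  have he' : ⟪e, g⟫_ℝ ≤ K * D * G :=
    (real_inner_le_norm e g).trans (mul_le_mul he hg (norm_nonneg g) ((norm_nonneg e).trans he))
  have hKu : K * ⟪u, g⟫_ℝ = ‖K • u + e‖ * (ρ + δ) - ⟪e, g⟫_ℝ := by
    rw [← halign, inner_add_left, real_inner_smul_left]; ring
  refine le_of_mul_le_mul_left ?_ hK
  nlinarith [mul_le_mul_of_nonneg_left hSlow hρ, mul_le_mul_of_nonneg_left he hρ]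

theorem mul_sq_norm_sum_smul_le {ι : Type*} [Fintype ι] {u : ι → E} {g : E} {ρ δ : ι → ℝ}
    {ρmin c Gf D G : ℝ} (hρmin : 0 ≤ ρmin) (hle : ∀ i, ρmin ≤ ρ i) (hρsum : ∑ i, ρ i = 1)
    (hc : 0 ≤ c) (hcGf : c * Gf = ρmin) (hu : ∀ i, ‖u i‖ ≤ Gf)
    (h : ∀ i, ρ i * ‖u i‖ - ρ i * D - Gf * |δ i| - D * G ≤ ⟪u i, g⟫_ℝ) :
    c * ‖∑ i, ρ i • u i‖ ^ 2 ≤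
      ⟪∑ i, ρ i • u i, g⟫_ℝ + (G + ∑ i, ρ i ^ 2) * D + Gf * ∑ i, ρ i * |δ i| := by
  have hρ : ∀ i, 0 ≤ ρ i := fun i => hρmin.trans (hle i)
  have hnorm : ‖∑ i, ρ i • u i‖ ≤ Gf :=
    norm_sum_smul_le_of_norm_le (fun i _ => hρ i) hρsum fun i _ => hu i
  have hclients : ∑ i, ρ i ^ 2 * ‖u i‖ ≤
      ∑ i, (ρ i * ⟪u i, g⟫_ℝ + ρ i ^ 2 * D + Gf * (ρ i * |δ i|) + D * G * ρ i) :=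
    sum_le_sum fun i _ => by nlinarith [mul_le_mul_of_nonneg_left (h i) (hρ i)]
  have hsum : ∑ i, (ρ i * ⟪u i, g⟫_ℝ + ρ i ^ 2 * D + Gf * (ρ i * |δ i|) + D * G * ρ i) =
      ⟪∑ i, ρ i • u i, g⟫_ℝ + (G + ∑ i, ρ i ^ 2) * D + Gf * ∑ i, ρ i * |δ i| := by
    simp only [sum_add_distrib, ← sum_mul, ← mul_sum, hρsum, sum_inner, real_inner_smul_left]
    ring
  calc c * ‖∑ i, ρ i • u i‖ ^ 2 ≤ ρmin * ‖∑ i, ρ i • u i‖ := by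
        rw [← hcGf, sq, ← mul_assoc, mul_right_comm]
        exact mul_le_mul_of_nonneg_right (mul_le_mul_of_nonneg_left hnorm hc) (norm_nonneg _)
    _ ≤ ∑ i, ρ i ^ 2 * ‖u i‖ := mul_norm_sum_smul_le_sum_sq_mul_norm u hρmin hle
    _ ≤ _ := by linarith

end InnerProductSpace

section Gradient

variable {E : Type*} [NormedAddCommGroup E] [InnerProductSpace ℝ E] [CompleteSpace E]

theorem hasGradientAt_sum_mul {ι : Type*} [Fintype ι] {f : ι → E → ℝ} (ρ : ι → ℝ) {x : E}
    (hf : ∀ i, DifferentiableAt ℝ (f i) x) :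
    HasGradientAt (fun y => ∑ i, ρ i * f i y) (∑ i, ρ i • gradient (f i) x) x := by
  rw [hasGradientAt_iff_hasFDerivAt]
  refine (HasFDerivAt.fun_sum fun i _ =>
    (hasGradientAt_iff_hasFDerivAt.mp (hf i).hasGradientAt).const_mul (ρ i)).congr_fderiv ?_
  simp [map_sum, map_smul]

theorem norm_gradient_sum_mul_sub_le {ι : Type*} [Fintype ι] {f : ι → E → ℝ} {ρ : ι → ℝ}
    {L : ℝ} (hf : ∀ i, Differentiable ℝ (f i)) (hρ : ∀ i, 0 ≤ ρ i) (hρsum : ∑ i, ρ i = 1)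
    (hLip : ∀ i x y, ‖gradient (f i) x - gradient (f i) y‖ ≤ L * ‖x - y‖) (x y : E) :
    ‖gradient (fun z => ∑ i, ρ i * f i z) x - gradient (fun z => ∑ i, ρ i * f i z) y‖ ≤
      L * ‖x - y‖ := by
  rw [(hasGradientAt_sum_mul ρ fun i => hf i x).gradient,
    (hasGradientAt_sum_mul ρ fun i => hf i y).gradient, ← sum_sub_distrib]
  simp_rw [← smul_sub]
  exact norm_sum_smul_le_of_norm_le (fun i _ => hρ i) hρsum fun i _ => hLip i x y

theorem le_add_inner_gradient_add_sq {φ : E → ℝ} {L : ℝ} (hφ : Differentiable ℝ φ)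
    (hLip : ∀ x y, ‖gradient φ x - gradient φ y‖ ≤ L * ‖x - y‖) (x y : E) :
    φ y ≤ φ x + ⟪gradient φ x, y - x⟫_ℝ + L / 2 * ‖y - x‖ ^ 2 := by
  set v := y - x
  let ψ : ℝ → ℝ := fun t => φ (x + t • v) - t * ⟪gradient φ x, v⟫_ℝ - L / 2 * t ^ 2 * ‖v‖ ^ 2
  have hψ : ∀ t, HasDerivAt ψ
      (⟪gradient φ (x + t • v) - gradient φ x, v⟫_ℝ - L * t * ‖v‖ ^ 2) t := by
    intro t
    have hline : HasDerivAt (fun t : ℝ => x + t • v) v t := by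
      simpa using ((hasDerivAt_id t).smul_const v).const_add x
    refine ((((hφ _).hasFDerivAt.comp_hasDerivAt t hline).sub
      ((hasDerivAt_id t).mul_const _)).sub
      (((hasDerivAt_pow 2 t).const_mul (L / 2)).mul_const (‖v‖ ^ 2))).congr_deriv ?_
    simp only [inner_sub_left, inner_gradient_left, Nat.cast_ofNat, one_mul]
    ring
  have hanti : AntitoneOn ψ (Set.Icc 0 1) := by
    refine antitoneOn_of_deriv_nonpos (convex_Icc 0 1)
      (fun t _ => (hψ t).continuousAt.continuousWithinAt)
      (fun t _ => (hψ t).differentiableAt.differentiableWithinAt) fun t ht => ?_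
    rw [interior_Icc] at ht
    rw [(hψ t).deriv, sub_nonpos]
    calc _ ≤ ‖gradient φ (x + t • v) - gradient φ x‖ * ‖v‖ := real_inner_le_norm _ _
      _ ≤ L * ‖t • v‖ * ‖v‖ := by gcongr; simpa using hLip (x + t • v) x
      _ = L * t * ‖v‖ ^ 2 := by rw [norm_smul, Real.norm_of_nonneg ht.1.le]; ring
  have := hanti (Set.left_mem_Icc.2 zero_le_one) (Set.right_mem_Icc.2 zero_le_one) zero_le_one
  simp only [ψ, zero_smul, one_smul, add_zero, zero_mul, one_mul, sub_zero, one_pow,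
    ne_eq, OfNat.ofNat_ne_zero, not_false_eq_true, zero_pow, mul_zero, v, add_sub_cancel] at this
  linarith

theorem norm_traj_sub_le {f : E → ℝ} {η Gf : ℝ} (hη : 0 ≤ η) (hGf : ∀ x, ‖gradient f x‖ ≤ Gf)
    (θ : E) (k : ℕ) : ‖traj f η θ k - θ‖ ≤ η * k * Gf := by
  induction k with
  | zero => simp [traj]
  | succ k ih =>
    calc ‖traj f η θ (k + 1) - θ‖ = ‖(traj f η θ k - θ) - η • gradient f (traj f η θ k)‖ := by
          rw [traj, sub_right_comm]
      _ ≤ η * k * Gf + η * Gf := by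
          refine (norm_sub_le _ _).trans (add_le_add ih ?_)
          rw [norm_smul, Real.norm_of_nonneg hη]
          exact mul_le_mul_of_nonneg_left (hGf _) hη
      _ = η * (k + 1 : ℕ) * Gf := by push_cast; ring

theorem norm_sum_gradient_traj_sub_le {f : E → ℝ} {L η Gf : ℝ} (hL : 0 ≤ L) (hη : 0 ≤ η)
    (hLip : ∀ x y, ‖gradient f x - gradient f y‖ ≤ L * ‖x - y‖)
    (hGf : ∀ x, ‖gradient f x‖ ≤ Gf) (θ : E) (K : ℕ) :
    ‖∑ k ∈ range K, (gradient f (traj f η θ k) - gradient f θ)‖ ≤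
      L * η * Gf * (K * (K - 1) / 2) := by
  induction K with
  | zero => simp
  | succ K ih =>
    rw [sum_range_succ]
    calc _ ≤ L * η * Gf * (K * (K - 1) / 2) + L * (η * K * Gf) :=
          (norm_add_le _ _).trans (add_le_add ih
            ((hLip _ _).trans (mul_le_mul_of_nonneg_left (norm_traj_sub_le hη hGf θ K) hL)))
      _ = _ := by push_cast; ring

theorem sub_le_inner_gradient_of_alignment {f : E → ℝ} {L Gf η ρ δ G : ℝ} {K Kmax : ℕ}
    {θ g : E} (hL : 0 ≤ L) (hη : 0 < η)
    (hLip : ∀ x y, ‖gradient f x - gradient f y‖ ≤ L * ‖x - y‖)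
    (hGf : ∀ x, ‖gradient f x‖ ≤ Gf) (hK : 1 ≤ K) (hKmax : K ≤ Kmax) (hρ : 0 ≤ ρ)
    (halign : ⟪‖η • ∑ k ∈ range K, gradient f (traj f η θ k)‖⁻¹ •
      (η • ∑ k ∈ range K, gradient f (traj f η θ k)), g⟫_ℝ = ρ + δ)
    (hg : ‖g‖ ≤ G) :
    ρ * ‖gradient f θ‖ - ρ * (L * Gf / 2 * (η * (Kmax - 1))) - Gf * |δ|
      - L * Gf / 2 * (η * (Kmax - 1)) * G ≤ ⟪gradient f θ, g⟫_ℝ := by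
  set S := ∑ k ∈ range K, gradient f (traj f η θ k)
  set e := ∑ k ∈ range K, (gradient f (traj f η θ k) - gradient f θ)
  have hK0 : (0 : ℝ) < K := by exact_mod_cast hK
  have hS : (K : ℝ) • gradient f θ + e = S := by
    simp only [e, S, sum_sub_distrib, sum_const, card_range, Nat.cast_smul_eq_nsmul]
    abel
  refine sub_le_inner_of_inner_eq_norm_mul hK0 hρ (e := e) ?_ ?_ ?_ hg
  · rw [hS, ← real_inner_normalize_smul_mul_norm hη, halign, mul_comm]
  · rw [hS]
    exact (norm_sum_le _ _).trans ((sum_le_sum fun k _ => hGf _).trans_eq (by simp))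
  · have hKmax' : (K : ℝ) ≤ Kmax := by exact_mod_cast hKmax
    have hcoef : 0 ≤ L * η * Gf * K := by
      have := (norm_nonneg _).trans (hGf θ)
      positivity
    calc ‖e‖ ≤ L * η * Gf * (K * (K - 1) / 2) :=
          norm_sum_gradient_traj_sub_le hL hη.le hLip hGf θ K
      _ ≤ K * (L * Gf / 2 * (η * (Kmax - 1))) := by nlinarith

theorem avg_sq_norm_gradient_le {φ : E → ℝ} {L c η G B φstar : ℝ} {θ g : ℕ → E} {R : ℕ → ℝ}
    (hφ : Differentiable ℝ φ) (hLip : ∀ x y, ‖gradient φ x - gradient φ y‖ ≤ L * ‖x - y‖)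
    (hL : 0 ≤ L) (hc : 0 < c) (hη : 0 < η) (hlow : ∀ x, φstar ≤ φ x)
    (hstep : ∀ t, θ (t + 1) = θ t - η • g t) (hg : ∀ t, ‖g t‖ ≤ G)
    (hround : ∀ t, c * ‖gradient φ (θ t)‖ ^ 2 ≤ ⟪gradient φ (θ t), g t⟫_ℝ + B + R t)
    {T : ℕ} (hT : 0 < T) :
    (1 / (T : ℝ)) * ∑ t ∈ range T, ‖gradient φ (θ t)‖ ^ 2 ≤
      (φ (θ 0) - φstar) / (c * η * T) + L * η * G ^ 2 / (2 * c) + B / c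
        + (1 / (c * T)) * ∑ t ∈ range T, R t := by
  have hdescent : ∀ t, c * η * ‖gradient φ (θ t)‖ ^ 2 ≤
      φ (θ t) - φ (θ (t + 1)) + (L / 2 * η ^ 2 * G ^ 2 + η * B) + η * R t := by
    intro t
    have h := le_add_inner_gradient_add_sq hφ hLip (θ t) (θ t - η • g t)
    rw [sub_sub_cancel_left, inner_neg_right, real_inner_smul_right, norm_neg, norm_smul,
      Real.norm_of_nonneg hη.le] at h
    rw [hstep]
    have hg2 : ‖g t‖ ^ 2 ≤ G ^ 2 := pow_le_pow_left₀ (norm_nonneg _) (hg t) 2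
    nlinarith [mul_le_mul_of_nonneg_left (hround t) hη.le,
      mul_le_mul_of_nonneg_left hg2 (by positivity : 0 ≤ L / 2 * η ^ 2)]
  have hsum : c * η * ∑ t ∈ range T, ‖gradient φ (θ t)‖ ^ 2 ≤
      φ (θ 0) - φstar + T * (L / 2 * η ^ 2 * G ^ 2 + η * B) + η * ∑ t ∈ range T, R t :=
    calc c * η * ∑ t ∈ range T, ‖gradient φ (θ t)‖ ^ 2
        ≤ ∑ t ∈ range T, (φ (θ t) - φ (θ (t + 1)) + (L / 2 * η ^ 2 * G ^ 2 + η * B) + η * R t) := by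
          rw [mul_sum]; exact sum_le_sum fun t _ => hdescent t
      _ = φ (θ 0) - φ (θ T) + T * (L / 2 * η ^ 2 * G ^ 2 + η * B) + η * ∑ t ∈ range T, R t := by
          rw [sum_add_distrib, sum_add_distrib, sum_range_sub', sum_const, card_range, nsmul_eq_mul,
            mul_sum]
      _ ≤ _ := by linarith [hlow (θ T)]
  have hcηT : 0 < c * η * T := mul_pos (mul_pos hc hη) (Nat.cast_pos.2 hT)
  calc (1 / (T : ℝ)) * ∑ t ∈ range T, ‖gradient φ (θ t)‖ ^ 2
      = (c * η * ∑ t ∈ range T, ‖gradient φ (θ t)‖ ^ 2) / (c * η * T) := by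
        field_simp
    _ ≤ (φ (θ 0) - φstar + T * (L / 2 * η ^ 2 * G ^ 2 + η * B) + η * ∑ t ∈ range T, R t) /
        (c * η * T) := div_le_div_of_nonneg_right hsum hcηT.le
    _ = _ := by field_simp; ring

end Gradient

theorem craft_approximate_alignment_general {d N : ℕ}
    (f : Fin N → EuclideanSpace ℝ (Fin d) → ℝ) (L Gf : ℝ)
    (hdiff : ∀ i, Differentiable ℝ (f i))
    (hLip : ∀ i x y, ‖gradient (f i) x - gradient (f i) y‖ ≤ L * ‖x - y‖)
    (hGf : ∀ i x, ‖gradient (f i) x‖ ≤ Gf)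
    (ρ : Fin N → ℝ) (hρpos : ∀ i, 0 < ρ i) (hρsum : ∑ i, ρ i = 1)
    (F : EuclideanSpace ℝ (Fin d) → ℝ) (hF : F = fun x => ∑ i, ρ i * f i x)
    (Fstar : ℝ) (hFstar : ∀ x, Fstar ≤ F x)
    (ρmin : ℝ) (hρminlb : ∀ i, ρmin ≤ ρ i) (hρminmem : ∃ i, ρ i = ρmin)
    (c : ℝ) (hc : c = ρmin / Gf)
    (ηl ηg : ℝ) (hηl : 0 < ηl) (hηg : 0 < ηg)
    (K : Fin N → ℕ) (hK : ∀ i, 1 ≤ K i)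
    (Kmax : ℕ) (hKmaxub : ∀ i, K i ≤ Kmax)
    (θt : ℕ → EuclideanSpace ℝ (Fin d)) (g : ℕ → EuclideanSpace ℝ (Fin d))
    (hstep : ∀ t, θt (t + 1) = θt t - ηg • g t)
    (gI : ℕ → Fin N → EuclideanSpace ℝ (Fin d))
    (hgI : ∀ t i, gI t i = ηl • ∑ k ∈ Finset.range (K i),
        gradient (f i) (traj (f i) ηl (θt t) k))
    (hne : ∀ t i, gI t i ≠ 0)
    (δ : ℕ → Fin N → ℝ)
    (halign : ∀ t i, ⟪‖gI t i‖⁻¹ • gI t i, g t⟫_ℝ = ρ i + δ t i)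
    (G : ℝ) (hG : ∀ t, ‖g t‖ ≤ G)
    (R : ℕ → ℝ)
    (hR : ∀ t, R t = (Gf + L * Gf / 2 * (ηl * ((Kmax : ℝ) - 1))) * ∑ i, ρ i * |δ t i|)
    (Bdrift : ℝ) (hB : Bdrift = L * Gf / 2 * (G + ∑ i, (ρ i) ^ 2))
    (T : ℕ) (hT : 1 ≤ T) :
    (1 / (T : ℝ)) * ∑ t ∈ Finset.range T, ‖gradient F (θt t)‖ ^ 2 ≤
      (F (θt 0) - Fstar) / (c * ηg * T) + L * ηg * G ^ 2 / (2 * c)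
      + Bdrift / c * (ηl * ((Kmax : ℝ) - 1))
      + (1 / (c * T)) * ∑ t ∈ Finset.range T, R t := by
  obtain ⟨i₀, rfl⟩ := hρminmem
  subst hF
  have hGf_pos : 0 < Gf := by
    obtain ⟨k, -, hk⟩ := exists_ne_zero_of_sum_ne_zero
      (right_ne_zero_of_smul (hgI 0 i₀ ▸ hne 0 i₀))
    exact (norm_pos_iff.2 hk).trans_le (hGf i₀ _)
  have hL : 0 ≤ L := nonneg_of_mul_nonneg_left
    ((norm_nonneg _).trans (hLip i₀ (gI 0 i₀) 0)) (by simpa using hne 0 i₀)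
  have hc_pos : 0 < c := hc ▸ div_pos (hρpos i₀) hGf_pos
  have hgradF : ∀ x, HasGradientAt (fun x => ∑ i, ρ i * f i x) (∑ i, ρ i • gradient (f i) x) x :=
    fun x => hasGradientAt_sum_mul ρ fun i => (hdiff i).differentiableAt
  refine (avg_sq_norm_gradient_le (B := Bdrift * (ηl * ((Kmax : ℝ) - 1)))
    (fun x => (hgradF x).differentiableAt)
    (norm_gradient_sum_mul_sub_le hdiff (fun i => (hρpos i).le) hρsum hLip) hL hc_pos hηg
    hFstar hstep hG (fun t => ?_) hT).trans_eq (by ring)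
  have hround := mul_sq_norm_sum_smul_le (hρpos i₀).le hρminlb hρsum hc_pos.le
    (by rw [hc]; field_simp) (fun i => hGf i (θt t)) fun i =>
      sub_le_inner_gradient_of_alignment hL hηl (hLip i) (hGf i) (hK i) (hKmaxub i)
        (hρpos i).le (by rw [← hgI]; exact halign t i) (hG t)
  have hD : 0 ≤ L * Gf / 2 * (ηl * ((Kmax : ℝ) - 1)) := mul_nonneg (by positivity)
    (mul_nonneg hηl.le (sub_nonneg.2 (by exact_mod_cast (hK i₀).trans (hKmaxub i₀))))
  have hδ : 0 ≤ ∑ i, ρ i * |δ t i| := sum_nonneg fun i _ => mul_nonneg (hρpos i).le (abs_nonneg _)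
  rw [(hgradF _).gradient, hR, hB]
  nlinarith [mul_nonneg hD hδ]

/-- **Approximate alignment under residual constraints.**
If the aggregates satisfy the perturbed alignment constraints
`⟪gᵢᵗ/‖gᵢᵗ‖, g_t⟫ = ρᵢ + δ_{t,i}`, then the CRAFT convergence bound holds with the
additional residual term `(1/(cT)) Σ_{t<T} R_t`, where
`R_t = (G_f + (L G_f/2) η_l (K_max−1)) Σᵢ ρᵢ |δ_{t,i}|`. -/
theorem craft_approximate_alignment {d N : ℕ} (hd : 1 ≤ d) (hN : 1 ≤ N)
    (f : Fin N → EuclideanSpace ℝ (Fin d) → ℝ) (L Gf : ℝ)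
    (hdiff : ∀ i, Differentiable ℝ (f i))
    (hLip : ∀ i x y, ‖gradient (f i) x - gradient (f i) y‖ ≤ L * ‖x - y‖)
    (hGf : ∀ i x, ‖gradient (f i) x‖ ≤ Gf)
    (ρ : Fin N → ℝ) (hρpos : ∀ i, 0 < ρ i) (hρsum : ∑ i, ρ i = 1)
    (F : EuclideanSpace ℝ (Fin d) → ℝ) (hF : F = fun x => ∑ i, ρ i * f i x)
    (Fstar : ℝ) (hFstar : ∀ x, Fstar ≤ F x)
    (ρmin : ℝ) (hρminlb : ∀ i, ρmin ≤ ρ i) (hρminmem : ∃ i, ρ i = ρmin)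
    (c : ℝ) (hc : c = ρmin / Gf)
    (ηl ηg : ℝ) (hηl : 0 < ηl) (hηg : 0 < ηg)
    (K : Fin N → ℕ) (hK : ∀ i, 1 ≤ K i)
    (Kmax : ℕ) (hKmaxub : ∀ i, K i ≤ Kmax) (hKmaxmem : ∃ i, K i = Kmax)
    (θt : ℕ → EuclideanSpace ℝ (Fin d)) (g : ℕ → EuclideanSpace ℝ (Fin d))
    (hstep : ∀ t, θt (t + 1) = θt t - ηg • g t)
    (gI : ℕ → Fin N → EuclideanSpace ℝ (Fin d))
    (hgI : ∀ t i, gI t i = ηl • ∑ k ∈ Finset.range (K i),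
        gradient (f i) (traj (f i) ηl (θt t) k))
    (hne : ∀ t i, gI t i ≠ 0)
    (δ : ℕ → Fin N → ℝ)
    (halign : ∀ t i, ⟪‖gI t i‖⁻¹ • gI t i, g t⟫_ℝ = ρ i + δ t i)
    (G : ℝ) (hG : ∀ t, ‖g t‖ ≤ G)
    (R : ℕ → ℝ)
    (hR : ∀ t, R t = (Gf + L * Gf / 2 * (ηl * ((Kmax : ℝ) - 1))) * ∑ i, ρ i * |δ t i|)
    (Bdrift : ℝ) (hB : Bdrift = L * Gf / 2 * (G + ∑ i, (ρ i) ^ 2))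
    (T : ℕ) (hT : 1 ≤ T) :
    (1 / (T : ℝ)) * ∑ t ∈ Finset.range T, ‖gradient F (θt t)‖ ^ 2 ≤
      (F (θt 0) - Fstar) / (c * ηg * T) + L * ηg * G ^ 2 / (2 * c)
      + Bdrift / c * (ηl * ((Kmax : ℝ) - 1))
      + (1 / (c * T)) * ∑ t ∈ Finset.range T, R t :=
  craft_approximate_alignment_general f L Gf hdiff hLip hGf ρ hρpos hρsum F hF Fstar hFstar ρmin
    hρminlb hρminmem c hc ηl ηg hηl hηg K hK Kmax hKmaxub θt g hstep gI hgI hne δ halign G hG R hR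
    Bdrift hB T hT
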